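/- arXiv:1807.11467 — 2 statements merged into one kernel-verified Lean document; each statement's English description precedes it below -/
import Mathlib

section
/- Two-state HLL estimate (Corollary 2.4): Let d ∈ {1,2,3}, let U, Ũ ∈ 𝒢 with magnetic fields B, B̃, and let ξ ∈ ℝ^d be a unit vector. For every α ≥ α_r(U, Ũ; ξ) and every α̃ ≤ α_l(Ũ, U; ξ) one has α > α̃, and the state Ū = (α − α̃)⁻¹ (αU − ⟨ξ, F(U)⟩ − α̃Ũ + ⟨ξ, F(Ũ)⟩) has positive density component and satisfies, for all v*, B* ∈ ℝ³, Ū·n* + |B*|²/2 + (v*·B*)(α − α̃)⁻¹(⟨ξ, B⟩ − ⟨ξ, B̃⟩) ≥ 0. Furthermore, if ⟨ξ, B⟩ = ⟨ξ, B̃⟩ then Ū ∈ cl(𝒢*). -/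
noncomputable section

open Finset

/-- An MHD state `U = (ρ, m, B, E)` viewed as a vector in `ℝ⁸`. -/
abbrev MHDState := Fin 8 → ℝ

namespace MHD

/-- Build a state from density, momentum, magnetic field, total energy. -/
def mk (ρ : ℝ) (m B : Fin 3 → ℝ) (E : ℝ) : MHDState :=
  ![ρ, m 0, m 1, m 2, B 0, B 1, B 2, E]

/-- Density component. -/
def dens (U : MHDState) : ℝ := U 0

/-- Momentum components. -/
def mom (U : MHDState) : Fin 3 → ℝ := ![U 1, U 2, U 3]

/-- Magnetic field components. -/
def magB (U : MHDState) : Fin 3 → ℝ := ![U 4, U 5, U 6]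

/-- Total energy component. -/
def toten (U : MHDState) : ℝ := U 7

/-- Euclidean dot product on `ℝ³`. -/
def dot3 (a b : Fin 3 → ℝ) : ℝ := ∑ k, a k * b k

/-- Squared Euclidean norm on `ℝ³`. -/
def sq3 (a : Fin 3 → ℝ) : ℝ := dot3 a a

/-- Euclidean norm on `ℝ³`. -/
def norm3 (a : Fin 3 → ℝ) : ℝ := Real.sqrt (sq3 a)

/-- Velocity `v = m / ρ`. -/
def vel (U : MHDState) : Fin 3 → ℝ := fun k => mom U k / dens U

/-- Internal energy `𝓔(U) = E − (|m|²/ρ + |B|²)/2`. -/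
def intE (U : MHDState) : ℝ := toten U - (sq3 (mom U) / dens U + sq3 (magB U)) / 2

/-- Specific internal energy `e = 𝓔(U)/ρ`. -/
def specE (U : MHDState) : ℝ := intE U / dens U

/-- The admissible state set `𝒢`. -/
def Gset : Set MHDState := {U | 0 < dens U ∧ 0 < intE U}

/-- The set `𝒢_ρ` of states with positive density. -/
def Grho : Set MHDState := {U | 0 < dens U}

/-- Euclidean dot product on `ℝ⁸`. -/
def dot8 (U V : MHDState) : ℝ := ∑ i, U i * V i

/-- The vector `n* = (|v*|²/2, −v*, −B*, 1)`. -/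
def nstar (vs Bs : Fin 3 → ℝ) : MHDState :=
  mk (sq3 vs / 2) (fun k => -vs k) (fun k => -Bs k) 1

/-- The set `𝒢*`. -/
def GstarSet : Set MHDState :=
  {U | 0 < dens U ∧ ∀ vs Bs : Fin 3 → ℝ, 0 < dot8 U (nstar vs Bs) + sq3 Bs / 2}

/-- Equation of state assumption: for `ρ > 0`, `e > 0 ↔ p(ρ,e) > 0`. -/
def IsEOS (pfun : ℝ → ℝ → ℝ) : Prop :=
  ∀ ρ e : ℝ, 0 < ρ → (0 < e ↔ 0 < pfun ρ e)

/-- Pressure of a state, via the equation of state. -/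
def pres (pfun : ℝ → ℝ → ℝ) (U : MHDState) : ℝ := pfun (dens U) (specE U)

/-- Total pressure `p + |B|²/2`. -/
def ptot (pfun : ℝ → ℝ → ℝ) (U : MHDState) : ℝ := pres pfun U + sq3 (magB U) / 2

/-- The `i`-th flux `F_i(U)`. -/
def flux (pfun : ℝ → ℝ → ℝ) (i : Fin 3) (U : MHDState) : MHDState :=
  mk (dens U * vel U i)
    (fun k => dens U * vel U i * vel U k - magB U i * magB U k
      + ptot pfun U * (if k = i then 1 else 0))
    (fun k => vel U i * magB U k - magB U i * vel U k)
    (vel U i * (toten U + ptot pfun U) - magB U i * dot3 (vel U) (magB U))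

/-- Directional inner product `⟨ξ, w⟩ = Σ_{k<d} ξ_k w_k` for `ξ ∈ ℝ^d`, `w ∈ ℝ³`, `d ≤ 3`. -/
def dirDot {d : ℕ} (hd : d ≤ 3) (ξ : Fin d → ℝ) (w : Fin 3 → ℝ) : ℝ :=
  ∑ k, ξ k * w (Fin.castLE hd k)

/-- Directional flux `⟨ξ, F(U)⟩ = Σ_{i<d} ξ_i F_i(U)`. -/
def dirFlux (pfun : ℝ → ℝ → ℝ) {d : ℕ} (hd : d ≤ 3) (ξ : Fin d → ℝ) (U : MHDState) :
    MHDState :=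
  ∑ i, ξ i • flux pfun (Fin.castLE hd i) U

/-- `ξ` is a unit vector. -/
def unitVec {d : ℕ} (ξ : Fin d → ℝ) : Prop := (∑ k, (ξ k) ^ 2) = 1

/-- `𝒞_s(U) = p / (ρ √(2e))`. -/
def soundC (pfun : ℝ → ℝ → ℝ) (U : MHDState) : ℝ :=
  pres pfun U / (dens U * Real.sqrt (2 * specE U))

/-- `𝒞(U; ξ)`. -/
def waveC (pfun : ℝ → ℝ → ℝ) {d : ℕ} (hd : d ≤ 3) (ξ : Fin d → ℝ) (U : MHDState) : ℝ :=
  Real.sqrt ((soundC pfun U ^ 2 + sq3 (magB U) / dens U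
    + Real.sqrt ((soundC pfun U ^ 2 + sq3 (magB U) / dens U) ^ 2
      - 4 * soundC pfun U ^ 2 * dirDot hd ξ (magB U) ^ 2 / dens U)) / 2)

/-- Roe-type averaged velocity `v̄ = (√ρ v + √ρ̃ ṽ)/(√ρ + √ρ̃)`. -/
def roeV (U Ut : MHDState) : Fin 3 → ℝ := fun k =>
  (Real.sqrt (dens U) * vel U k + Real.sqrt (dens Ut) * vel Ut k)
    / (Real.sqrt (dens U) + Real.sqrt (dens Ut))

/-- `α_r(U, Ũ; ξ)`. -/
def alphaR (pfun : ℝ → ℝ → ℝ) {d : ℕ} (hd : d ≤ 3) (ξ : Fin d → ℝ) (U Ut : MHDState) : ℝ :=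
  max (dirDot hd ξ (vel U)) (dirDot hd ξ (roeV U Ut)) + waveC pfun hd ξ U
    + norm3 (magB U - magB Ut) / (Real.sqrt (dens U) + Real.sqrt (dens Ut))

/-- `α_l(U, Ũ; ξ)`. -/
def alphaL (pfun : ℝ → ℝ → ℝ) {d : ℕ} (hd : d ≤ 3) (ξ : Fin d → ℝ) (U Ut : MHDState) : ℝ :=
  min (dirDot hd ξ (vel U)) (dirDot hd ξ (roeV U Ut)) - waveC pfun hd ξ U
    - norm3 (magB U - magB Ut) / (Real.sqrt (dens U) + Real.sqrt (dens Ut))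

/-- `α_⋆(U, Ũ; ξ)`. -/
def alphaS (pfun : ℝ → ℝ → ℝ) {d : ℕ} (hd : d ≤ 3) (ξ : Fin d → ℝ) (U Ut : MHDState) : ℝ :=
  max (|dirDot hd ξ (vel U)|) (|dirDot hd ξ (roeV U Ut)|) + waveC pfun hd ξ U
    + norm3 (magB U - magB Ut) / (Real.sqrt (dens U) + Real.sqrt (dens Ut))

/-- The vector `θ(U, v*, B*) = 2^{−1/2}(B − B*, √ρ(v − v*), √(2ρe)) ∈ ℝ⁷`. -/
def theta (U : MHDState) (vs Bs : Fin 3 → ℝ) : Fin 7 → ℝ :=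
  ![(magB U 0 - Bs 0) / Real.sqrt 2,
    (magB U 1 - Bs 1) / Real.sqrt 2,
    (magB U 2 - Bs 2) / Real.sqrt 2,
    Real.sqrt (dens U) * (vel U 0 - vs 0) / Real.sqrt 2,
    Real.sqrt (dens U) * (vel U 1 - vs 1) / Real.sqrt 2,
    Real.sqrt (dens U) * (vel U 2 - vs 2) / Real.sqrt 2,
    Real.sqrt (2 * intE U) / Real.sqrt 2]

/-- `|θ|²`. -/
def thetaSq (U : MHDState) (vs Bs : Fin 3 → ℝ) : ℝ := ∑ k, theta U vs Bs k ^ 2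

/-- Godunov–Powell source vector `S(U) = (0, B, v, v·B)`. -/
def source (U : MHDState) : MHDState := mk 0 (magB U) (vel U) (dot3 (vel U) (magB U))

/-- HLL numerical flux with clamped wave speeds `σm ≤ 0 ≤ σp`. -/
def hllFlux (pfun : ℝ → ℝ → ℝ) {d : ℕ} (hd : d ≤ 3) (ξ : Fin d → ℝ)
    (Um Up : MHDState) (σm σp : ℝ) : MHDState :=
  (σp - σm)⁻¹ • (σp • dirFlux pfun hd ξ Um - σm • dirFlux pfun hd ξ Up
    + (σm * σp) • (Up - Um))

/-- HLL intermediate state `H(U⁻, U⁺; ξ)`. -/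
def hllMid (pfun : ℝ → ℝ → ℝ) {d : ℕ} (hd : d ≤ 3) (ξ : Fin d → ℝ)
    (Um Up : MHDState) (σm σp : ℝ) : MHDState :=
  (σp - σm)⁻¹ • (σp • Up - dirFlux pfun hd ξ Up - σm • Um + dirFlux pfun hd ξ Um)

/-- The quantity `α̂_j` of Theorem 2.3. -/
def alphaHat (pfun : ℝ → ℝ → ℝ) {d : ℕ} (hd : d ≤ 3) {N : ℕ}
    (s : Fin N → ℝ) (ξ : Fin N → Fin d → ℝ) (U : Fin N → MHDState) (j : Fin N) : ℝ :=
  max (dirDot hd (ξ j) (vel (U j)))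
      ((∑ i, s i)⁻¹ * ∑ i, s i * dirDot hd (fun k => ξ j k - ξ i k) (roeV (U j) (U i)))
  + waveC pfun hd (ξ j) (U j)
  + 2 * (∑ i, s i)⁻¹ * ∑ i, s i *
      (norm3 (magB (U j) - magB (U i)) / (Real.sqrt (dens (U j)) + Real.sqrt (dens (U i))))

def d1le3 : (1 : ℕ) ≤ 3 := by omega
def d2le3 : (2 : ℕ) ≤ 3 := by omega

/-- In one dimension the direction `ξ = 1`. -/
def xi1 : Fin 1 → ℝ := fun _ => 1

/-!
Write `φ(U) = U·n* + |B*|²/2 = ρ|v - v*|²/2 + |B - B*|²/2 + ρe`. With `u = v - v*` and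
`b = B - B*`, the flux obeys
`⟨ξ, F(U)⟩·n* - (v*·B*)⟨ξ, B⟩ = ⟨ξ, v⟩ φ(U) + A(U) - |b|²⟨ξ, u⟩/2 - |B*|²⟨ξ, v*⟩/2`,
where `A(U) = p⟨ξ, u⟩ + (b·B)⟨ξ, u⟩ - (u·b)⟨ξ, B⟩` satisfies `|A(U)| ≤ 𝒞(U; ξ) φ(U)`: after
splitting `u`, `b`, `B` along and across `ξ`, `A` is bounded by a quadratic form whose largest
eigenvalue is `𝒞(U; ξ)`. Multiplying the claim by `α - α̃`, the `|B*|²⟨ξ, v*⟩` terms cancel and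
what is left is a term for `U` plus the same term for `Ũ` seen from the reflected direction `-ξ`.
Since `α ≥ max{⟨ξ, v⟩, ⟨ξ, v̄⟩} + 𝒞 + δ` with `δ = |B - B̃|/(√ρ + √ρ̃)`, these leave at least
`δ (φ(U) + φ(Ũ))` plus the cross term `(|b|² - |b̃|²)⟨ξ, v̄ - v*⟩/2`, whose absolute value the
Roe weights bound by `δ (φ(U) + φ(Ũ))`. When `⟨ξ, B⟩ = ⟨ξ, B̃⟩` this says `φ(Ū) ≥ 0` for all
`v*, B*`, and raising the energy of `Ū` by any `ε > 0` lands in `𝒢*`.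
-/

open scoped InnerProductSpace

lemma dot3_eq_inner (a b : Fin 3 → ℝ) :
    dot3 a b = ⟪WithLp.toLp 2 a, WithLp.toLp 2 b⟫_ℝ := by
  simp [dot3, PiLp.inner_apply, mul_comm]

lemma norm3_eq_norm (a : Fin 3 → ℝ) : norm3 a = ‖WithLp.toLp 2 a‖ := by
  rw [norm3, sq3, dot3_eq_inner, real_inner_self_eq_norm_sq, Real.sqrt_sq (norm_nonneg _)]

lemma sq3_eq_norm3_sq (a : Fin 3 → ℝ) : sq3 a = norm3 a ^ 2 := by
  rw [norm3_eq_norm, ← real_inner_self_eq_norm_sq, ← dot3_eq_inner, sq3]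

lemma norm3_nonneg (a : Fin 3 → ℝ) : 0 ≤ norm3 a := Real.sqrt_nonneg _

lemma sq3_nonneg (a : Fin 3 → ℝ) : 0 ≤ sq3 a := by
  rw [sq3_eq_norm3_sq]; positivity

lemma abs_dot3_le (a b : Fin 3 → ℝ) : |dot3 a b| ≤ norm3 a * norm3 b := by
  rw [dot3_eq_inner, norm3_eq_norm, norm3_eq_norm]
  exact abs_real_inner_le_norm _ _

lemma norm3_add_le (a b : Fin 3 → ℝ) : norm3 (a + b) ≤ norm3 a + norm3 b := by
  simpa only [norm3_eq_norm, WithLp.toLp_add] using norm_add_le _ _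

lemma norm3_smul (c : ℝ) (a : Fin 3 → ℝ) : norm3 (c • a) = |c| * norm3 a := by
  rw [norm3_eq_norm, norm3_eq_norm, WithLp.toLp_smul, norm_smul, Real.norm_eq_abs]

lemma norm3_sub_comm (a b : Fin 3 → ℝ) : norm3 (a - b) = norm3 (b - a) := by
  rw [norm3_eq_norm, norm3_eq_norm, WithLp.toLp_sub, WithLp.toLp_sub, norm_sub_rev]

lemma abs_dot3_le_of_unit {n : Fin 3 → ℝ} (hn : sq3 n = 1) (a : Fin 3 → ℝ) :
    |dot3 n a| ≤ norm3 a := by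
  have : norm3 n = 1 := by rw [norm3, hn, Real.sqrt_one]
  simpa [this] using abs_dot3_le n a

def perp (n a : Fin 3 → ℝ) : Fin 3 → ℝ := a - dot3 n a • n

lemma dot3_perp_perp {n : Fin 3 → ℝ} (hn : sq3 n = 1) (a c : Fin 3 → ℝ) :
    dot3 (perp n a) (perp n c) = dot3 a c - dot3 n a * dot3 n c := by
  simp only [sq3, dot3, perp, Fin.sum_univ_three, Pi.sub_apply, Pi.smul_apply,
    smul_eq_mul] at hn ⊢
  linear_combination ((n 0 * a 0 + n 1 * a 1 + n 2 * a 2) *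
    (n 0 * c 0 + n 1 * c 1 + n 2 * c 2)) * hn

lemma sq3_perp {n : Fin 3 → ℝ} (hn : sq3 n = 1) (a : Fin 3 → ℝ) :
    sq3 (perp n a) = sq3 a - dot3 n a ^ 2 := by
  rw [sq3, dot3_perp_perp hn, sq3, sq]

lemma abs_dot3_mul_sub_le {n : Fin 3 → ℝ} (hn : sq3 n = 1) (u b B : Fin 3 → ℝ) :
    |dot3 b B * dot3 n u - dot3 u b * dot3 n B|
      ≤ norm3 (perp n b) * norm3 (perp n B) * |dot3 n u|
        + norm3 (perp n u) * norm3 (perp n b) * |dot3 n B| := by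
  have hred : dot3 b B * dot3 n u - dot3 u b * dot3 n B
      = dot3 (perp n b) (perp n B) * dot3 n u - dot3 (perp n u) (perp n b) * dot3 n B := by
    rw [dot3_perp_perp hn, dot3_perp_perp hn]; ring
  rw [hred]
  refine (abs_sub _ _).trans (add_le_add ?_ ?_) <;> rw [abs_mul] <;>
    exact mul_le_mul_of_nonneg_right (abs_dot3_le _ _) (abs_nonneg _)

def dirVec {d : ℕ} (ξ : Fin d → ℝ) : Fin 3 → ℝ :=
  fun k => if h : (k : ℕ) < d then ξ ⟨k, h⟩ else 0

lemma dirDot_eq_dot3 {d : ℕ} (hd : d ≤ 3) (ξ : Fin d → ℝ) (w : Fin 3 → ℝ) :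
    dirDot hd ξ w = dot3 (dirVec ξ) w := by
  interval_cases d <;> simp [dirDot, dot3, dirVec, Fin.sum_univ_succ, Fin.castLE]

lemma sq3_dirVec {d : ℕ} (hd : d ≤ 3) {ξ : Fin d → ℝ} (hξ : unitVec ξ) :
    sq3 (dirVec ξ) = 1 := by
  rw [sq3, ← dirDot_eq_dot3 hd, dirDot, ← hξ]
  refine Finset.sum_congr rfl fun k _ => ?_
  simp [dirVec, sq]

lemma dirDot_sub {d : ℕ} (hd : d ≤ 3) (ξ : Fin d → ℝ) (a b : Fin 3 → ℝ) :
    dirDot hd ξ (a - b) = dirDot hd ξ a - dirDot hd ξ b := by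
  simp [dirDot, mul_sub, Finset.sum_sub_distrib]

lemma dirDot_neg_left {d : ℕ} (hd : d ≤ 3) (ξ : Fin d → ℝ) (w : Fin 3 → ℝ) :
    dirDot hd (-ξ) w = -dirDot hd ξ w := by
  simp [dirDot, Finset.sum_neg_distrib]

lemma unitVec_neg {d : ℕ} {ξ : Fin d → ℝ} (hξ : unitVec ξ) : unitVec (-ξ) := by
  simpa [unitVec] using hξ

lemma dirFlux_neg (pfun : ℝ → ℝ → ℝ) {d : ℕ} (hd : d ≤ 3) (ξ : Fin d → ℝ) (U : MHDState) :
    dirFlux pfun hd (-ξ) U = -dirFlux pfun hd ξ U := by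
  simp [dirFlux, neg_smul, Finset.sum_neg_distrib]

lemma waveC_neg (pfun : ℝ → ℝ → ℝ) {d : ℕ} (hd : d ≤ 3) (ξ : Fin d → ℝ) (U : MHDState) :
    waveC pfun hd (-ξ) U = waveC pfun hd ξ U := by
  simp only [waveC, dirDot_neg_left, neg_sq]

lemma dirDot_sq_le_sq3 {d : ℕ} (hd : d ≤ 3) {ξ : Fin d → ℝ} (hξ : unitVec ξ) (w : Fin 3 → ℝ) :
    dirDot hd ξ w ^ 2 ≤ sq3 w := by
  rw [dirDot_eq_dot3, sq3_eq_norm3_sq, ← sq_abs]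
  exact pow_le_pow_left₀ (abs_nonneg _) (abs_dot3_le_of_unit (sq3_dirVec hd hξ) w) 2

lemma le_larger_root {S P z : ℝ} (h : z ^ 2 - S * z + P ≤ 0) :
    z ≤ (S + √(S ^ 2 - 4 * P)) / 2 := by
  have : 2 * z - S ≤ √(S ^ 2 - 4 * P) := Real.le_sqrt_of_sq_le (by nlinarith)
  linarith

/-- `r` is the larger root of `z² - (a + b) z + a x`; `𝒞(U; ξ)²` has this form with
`a = 𝒞_s²`, `b = |B|²/ρ`, `x = ⟨ξ, B⟩²/ρ`. -/
lemma larger_root_spec {a b x r : ℝ} (ha : 0 ≤ a) (hx : 0 ≤ x) (hxb : x ≤ b)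
    (hr : r = (a + b + √((a + b) ^ 2 - 4 * (a * x))) / 2) :
    a ≤ r ∧ x ≤ r ∧ (r - a) * (r - x) = (b - x) * r := by
  have hD : 0 ≤ (a + b) ^ 2 - 4 * (a * x) := by
    nlinarith [sq_nonneg (a - b), mul_nonneg ha (sub_nonneg.2 hxb)]
  refine ⟨hr ▸ le_larger_root (by nlinarith), hr ▸ le_larger_root (by nlinarith), ?_⟩
  have hsq := Real.sq_sqrt hD
  rw [hr]
  linear_combination hsq / 4

section WaveSpeed

variable {pfun : ℝ → ℝ → ℝ} {d : ℕ} (hd : d ≤ 3) {ξ : Fin d → ℝ} {U : MHDState}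

lemma waveC_sq_spec (hξ : unitVec ξ) (hρ : 0 < dens U) :
    soundC pfun U ^ 2 ≤ waveC pfun hd ξ U ^ 2
      ∧ dirDot hd ξ (magB U) ^ 2 / dens U ≤ waveC pfun hd ξ U ^ 2
      ∧ (waveC pfun hd ξ U ^ 2 - soundC pfun U ^ 2)
          * (waveC pfun hd ξ U ^ 2 - dirDot hd ξ (magB U) ^ 2 / dens U)
        = (sq3 (magB U) - dirDot hd ξ (magB U) ^ 2) / dens U * waveC pfun hd ξ U ^ 2 := by
  have hx : dirDot hd ξ (magB U) ^ 2 / dens U ≤ sq3 (magB U) / dens U :=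
    div_le_div_of_nonneg_right (dirDot_sq_le_sq3 hd hξ _) hρ.le
  obtain ⟨ha, hxr, hrel⟩ := larger_root_spec (sq_nonneg (soundC pfun U)) (by positivity) hx rfl
  have hsq : waveC pfun hd ξ U ^ 2 = (soundC pfun U ^ 2 + sq3 (magB U) / dens U
      + √((soundC pfun U ^ 2 + sq3 (magB U) / dens U) ^ 2
        - 4 * (soundC pfun U ^ 2 * (dirDot hd ξ (magB U) ^ 2 / dens U)))) / 2 := by
    have e : 4 * soundC pfun U ^ 2 * dirDot hd ξ (magB U) ^ 2 / dens U
        = 4 * (soundC pfun U ^ 2 * (dirDot hd ξ (magB U) ^ 2 / dens U)) := by ring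
    rw [waveC, e, Real.sq_sqrt (by linarith [sq_nonneg (soundC pfun U)])]
  rw [hsq, sub_div]
  exact ⟨ha, hxr, hrel⟩

lemma specE_pos (hU : U ∈ Gset) : 0 < specE U := div_pos hU.2 hU.1

lemma pres_pos (hEOS : IsEOS pfun) (hU : U ∈ Gset) : 0 < pres pfun U :=
  (hEOS _ _ hU.1).1 (specE_pos hU)

lemma soundC_pos (hEOS : IsEOS pfun) (hU : U ∈ Gset) : 0 < soundC pfun U :=
  div_pos (pres_pos hEOS hU) (mul_pos hU.1 (Real.sqrt_pos.2 (by linarith [specE_pos hU])))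

lemma waveC_pos (hEOS : IsEOS pfun) (hξ : unitVec ξ) (hU : U ∈ Gset) :
    0 < waveC pfun hd ξ U :=
  (soundC_pos hEOS hU).trans_le <| (pow_le_pow_iff_left₀ (soundC_pos hEOS hU).le
    (Real.sqrt_nonneg _) two_ne_zero).1 (waveC_sq_spec hd hξ hU.1).1

lemma pres_eq_soundC_mul (hU : U ∈ Gset) :
    pres pfun U = soundC pfun U * (√(dens U) * √(2 * intE U)) := by
  have hρ := hU.1
  have h : √(dens U) * √(2 * intE U) = dens U * √(2 * specE U) := by
    rw [← Real.sqrt_mul hρ.le, show dens U * (2 * intE U) = dens U ^ 2 * (2 * specE U) by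
      unfold specE; field_simp, Real.sqrt_mul (sq_nonneg _), Real.sqrt_sq hρ.le]
  rw [h, soundC, div_mul_cancel₀]
  exact (mul_pos hρ (Real.sqrt_pos.2 (by linarith [specE_pos hU]))).ne'

end WaveSpeed

/-- The hypotheses say that `l` is the largest eigenvalue of the symmetric matrix of the form
on the left. -/
lemma quadForm_le {a c e l s t w q : ℝ} (hl : 0 < l) (ha : a ^ 2 ≤ l ^ 2) (he : e ^ 2 ≤ l ^ 2)
    (hrel : (l ^ 2 - a ^ 2) * (l ^ 2 - e ^ 2) = c ^ 2 * l ^ 2) :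
    a * s * q + c * s * w + e * t * w ≤ l * (s ^ 2 + t ^ 2 + w ^ 2 + q ^ 2) / 2 := by
  have hsw : 2 * l * c * s * w ≤ (l ^ 2 - a ^ 2) * s ^ 2 + (l ^ 2 - e ^ 2) * w ^ 2 := by
    rcases (sub_nonneg.2 ha).eq_or_lt with h | h
    · have hc : c = 0 := by
        rw [← h, zero_mul] at hrel
        simpa [hl.ne'] using hrel
      subst hc
      nlinarith [mul_nonneg (sub_nonneg.2 he) (sq_nonneg w)]
    · nlinarith [sq_nonneg ((l ^ 2 - a ^ 2) * s - l * c * w)]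
  have h2 : 2 * l * (a * s * q + c * s * w + e * t * w)
      ≤ l ^ 2 * (s ^ 2 + t ^ 2 + w ^ 2 + q ^ 2) := by
    nlinarith [sq_nonneg (l * q - a * s), sq_nonneg (l * t - e * w)]
  nlinarith

lemma abs_magnetosonic_term_le {pfun : ℝ → ℝ → ℝ} (hEOS : IsEOS pfun) {d : ℕ} (hd : d ≤ 3)
    {ξ : Fin d → ℝ} (hξ : unitVec ξ) {U : MHDState} (hU : U ∈ Gset) (u b : Fin 3 → ℝ) :
    |pres pfun U * dirDot hd ξ u + dot3 b (magB U) * dirDot hd ξ u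
        - dot3 u b * dirDot hd ξ (magB U)|
      ≤ waveC pfun hd ξ U * (dens U * sq3 u / 2 + sq3 b / 2 + intE U) := by
  obtain ⟨ha, he, hrel⟩ := waveC_sq_spec hd hξ hU.1 (pfun := pfun)
  have hn := sq3_dirVec hd hξ
  simp only [dirDot_eq_dot3] at he hrel ⊢
  set n := dirVec ξ
  set B := magB U
  have hρ : 0 < √(dens U) := Real.sqrt_pos.2 hU.1
  have hρsq : √(dens U) ^ 2 = dens U := Real.sq_sqrt hU.1.le
  have htri : |pres pfun U * dot3 n u + dot3 b B * dot3 n u - dot3 u b * dot3 n B|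
      ≤ pres pfun U * |dot3 n u| + norm3 (perp n b) * norm3 (perp n B) * |dot3 n u|
        + norm3 (perp n u) * norm3 (perp n b) * |dot3 n B| := by
    rw [add_sub_assoc, add_assoc]
    refine (abs_add_le _ _).trans (add_le_add ?_ (abs_dot3_mul_sub_le hn u b B))
    rw [abs_mul, abs_of_pos (pres_pos hEOS hU)]
  have hform := quadForm_le (s := √(dens U) * |dot3 n u|) (t := √(dens U) * norm3 (perp n u))
    (w := norm3 (perp n b)) (q := √(2 * intE U)) (c := norm3 (perp n B) / √(dens U))
    (e := |dot3 n B| / √(dens U)) (waveC_pos hd hEOS hξ hU)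
    ha (by rwa [div_pow, sq_abs, hρsq]) (by
      simpa only [div_pow, sq_abs, hρsq, ← sq3_eq_norm3_sq, sq3_perp hn] using hrel)
  have hsum : (√(dens U) * |dot3 n u|) ^ 2 + (√(dens U) * norm3 (perp n u)) ^ 2
      + norm3 (perp n b) ^ 2 + √(2 * intE U) ^ 2
      ≤ 2 * (dens U * sq3 u / 2 + sq3 b / 2 + intE U) := by
    rw [mul_pow, mul_pow, sq_abs, hρsq, ← sq3_eq_norm3_sq, ← sq3_eq_norm3_sq, sq3_perp hn,
      sq3_perp hn, Real.sq_sqrt (by linarith [hU.2])]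
    nlinarith [sq_nonneg (dot3 n b)]
  calc _ ≤ _ := htri
    _ = soundC pfun U * (√(dens U) * |dot3 n u|) * √(2 * intE U)
        + norm3 (perp n B) / √(dens U) * (√(dens U) * |dot3 n u|) * norm3 (perp n b)
        + |dot3 n B| / √(dens U) * (√(dens U) * norm3 (perp n u)) * norm3 (perp n b) := by
      rw [pres_eq_soundC_mul hU]
      field_simp
    _ ≤ _ := hform
    _ ≤ _ := by
      have := (waveC_pos hd hEOS hξ hU (pfun := pfun)).le
      nlinarith

def phi (U : MHDState) (vs Bs : Fin 3 → ℝ) : ℝ := dot8 U (nstar vs Bs) + sq3 Bs / 2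

lemma phi_eq {U : MHDState} (h : dens U ≠ 0) (vs Bs : Fin 3 → ℝ) :
    phi U vs Bs = dens U * sq3 (vel U - vs) / 2 + sq3 (magB U - Bs) / 2 + intE U := by
  simp only [dens] at h
  simp only [phi, dot8, nstar, mk, sq3, dot3, Fin.sum_univ_succ, Fin.isValue, Fin.succ_zero_eq_one,
    univ_unique, Fin.default_eq_zero, sum_singleton, Fin.succ_one_eq_two, Matrix.cons_val_zero,
    Matrix.cons_val_succ, mul_neg, Fin.reduceSucc, Matrix.cons_val_fin_one, mul_one, dens,
    Pi.sub_apply, vel, mom, magB, intE, toten, sum_const, card_singleton, one_smul]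
  field_simp
  ring

lemma dirFlux_eq_sum (pfun : ℝ → ℝ → ℝ) {d : ℕ} (hd : d ≤ 3) (ξ : Fin d → ℝ) (U : MHDState) :
    dirFlux pfun hd ξ U = ∑ k, dirVec ξ k • flux pfun k U := by
  interval_cases d <;> simp [dirFlux, dirVec, Fin.sum_univ_succ, Fin.castLE]

lemma dot8_sum_flux_nstar (pfun : ℝ → ℝ → ℝ) {U : MHDState} (h : dens U ≠ 0)
    (n vs Bs : Fin 3 → ℝ) :
    dot8 (∑ k, n k • flux pfun k U) (nstar vs Bs) - dot3 vs Bs * dot3 n (magB U)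
      = dot3 n (vel U) * phi U vs Bs
        + (pres pfun U * dot3 n (vel U - vs)
          + dot3 (magB U - Bs) (magB U) * dot3 n (vel U - vs)
          - dot3 (vel U - vs) (magB U - Bs) * dot3 n (magB U))
        - sq3 (magB U - Bs) / 2 * dot3 n (vel U - vs) - sq3 Bs / 2 * dot3 n vs := by
  rw [phi_eq h]
  simp only [dens] at h
  simp only [dot8, flux, mk, dens, Fin.isValue, vel, mom, Matrix.cons_val_zero, magB, ptot, sq3,
    dot3, Fin.sum_univ_succ, Matrix.cons_val_succ, univ_unique, Fin.default_eq_zero,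
    Matrix.cons_val_fin_one, sum_const, card_singleton, one_smul, mul_ite, mul_one, mul_zero,
    Matrix.cons_val_one, Matrix.cons_val, toten, Matrix.smul_cons, smul_eq_mul, Matrix.smul_empty,
    Finset.sum_apply, ↓reduceIte, one_ne_zero, add_zero, Fin.reduceEq, Fin.succ_zero_eq_one,
    zero_ne_one, sum_singleton, Fin.succ_one_eq_two, nstar, mul_neg, smul_add, Pi.sub_apply, intE]
  field_simp
  ring

lemma add_le_phi {U : MHDState} (hU : U ∈ Gset) (vs Bs : Fin 3 → ℝ) :
    dens U * sq3 (vel U - vs) / 2 + sq3 (magB U - Bs) / 2 ≤ phi U vs Bs := by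
  rw [phi_eq hU.1.ne']
  linarith [hU.2]

lemma phi_dirFlux_bound {pfun : ℝ → ℝ → ℝ} (hEOS : IsEOS pfun) {d : ℕ} (hd : d ≤ 3)
    {ξ : Fin d → ℝ} (hξ : unitVec ξ) {U : MHDState} (hU : U ∈ Gset) {α w δ : ℝ}
    (hα : max (dirDot hd ξ (vel U)) w + waveC pfun hd ξ U + δ ≤ α) (vs Bs : Fin 3 → ℝ) :
    δ * phi U vs Bs + sq3 (magB U - Bs) / 2 * (w - dirDot hd ξ vs)
      ≤ α * phi U vs Bs - dot8 (dirFlux pfun hd ξ U) (nstar vs Bs)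
        + dot3 vs Bs * dirDot hd ξ (magB U) - sq3 Bs / 2 * dirDot hd ξ vs := by
  have hid := dot8_sum_flux_nstar pfun hU.1.ne' (dirVec ξ) vs Bs
  rw [← dirFlux_eq_sum pfun hd] at hid
  simp only [← dirDot_eq_dot3 hd ξ, dirDot_sub] at hid
  have hA := (abs_le.1 (abs_magnetosonic_term_le hEOS hd hξ hU (vel U - vs) (magB U - Bs))).2
  rw [dirDot_sub] at hA
  have hφ := add_le_phi hU vs Bs
  rw [← phi_eq hU.1.ne'] at hA
  have hv := le_max_left (dirDot hd ξ (vel U)) w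
  have hw := le_max_right (dirDot hd ξ (vel U)) w
  have hx : 0 ≤ sq3 (magB U - Bs) / 2 := by linarith [sq3_nonneg (magB U - Bs)]
  -- with `m = α - ⟨ξ, v⟩ - 𝒞 - δ ≥ 0`: `|B - B*|²(⟨ξ, v⟩ - w)/2 ≥ -m φ` as `|B - B*|²/2 ≤ φ`
  nlinarith [mul_nonneg hx (by linarith : 0 ≤ α - waveC pfun hd ξ U - δ - w),
    mul_nonneg (by linarith [mul_nonneg hU.1.le (sq3_nonneg (vel U - vs))] :
        0 ≤ phi U vs Bs - sq3 (magB U - Bs) / 2)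
      (by linarith : 0 ≤ α - dirDot hd ξ (vel U) - waveC pfun hd ξ U - δ)]

lemma dot8_neg_left (U V : MHDState) : dot8 (-U) V = -dot8 U V := neg_dotProduct U V

lemma phi_dirFlux_bound_of_le_min {pfun : ℝ → ℝ → ℝ} (hEOS : IsEOS pfun) {d : ℕ}
    (hd : d ≤ 3) {ξ : Fin d → ℝ} (hξ : unitVec ξ) {U : MHDState} (hU : U ∈ Gset) {α w δ : ℝ}
    (hα : α ≤ min (dirDot hd ξ (vel U)) w - waveC pfun hd ξ U - δ) (vs Bs : Fin 3 → ℝ) :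
    δ * phi U vs Bs - sq3 (magB U - Bs) / 2 * (w - dirDot hd ξ vs)
      ≤ -α * phi U vs Bs + dot8 (dirFlux pfun hd ξ U) (nstar vs Bs)
        - dot3 vs Bs * dirDot hd ξ (magB U) + sq3 Bs / 2 * dirDot hd ξ vs := by
  have hα' : max (dirDot hd (-ξ) (vel U)) (-w) + waveC pfun hd (-ξ) U + δ ≤ -α := by
    rw [dirDot_neg_left, waveC_neg, max_neg_neg]
    linarith
  have h := phi_dirFlux_bound hEOS hd (unitVec_neg hξ) hU hα' vs Bs
  simp only [dirDot_neg_left, dirFlux_neg, dot8_neg_left] at h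
  linarith

lemma abs_sq3_sub_sq3_le (a c : Fin 3 → ℝ) :
    |sq3 a - sq3 c| ≤ norm3 (a - c) * (norm3 a + norm3 c) := by
  have h : sq3 a - sq3 c = dot3 (a - c) (a + c) := by
    simp only [sq3, dot3, Fin.sum_univ_three, Pi.sub_apply, Pi.add_apply]; ring
  rw [h]
  exact (abs_dot3_le _ _).trans
    (mul_le_mul_of_nonneg_left (norm3_add_le a c) (norm3_nonneg _))

lemma norm3_roeV_sub_le {U Ut : MHDState} (hρ : 0 < dens U) (hρt : 0 < dens Ut)
    (vs : Fin 3 → ℝ) :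
    norm3 (roeV U Ut - vs)
      ≤ (√(dens U) * norm3 (vel U - vs) + √(dens Ut) * norm3 (vel Ut - vs))
        / (√(dens U) + √(dens Ut)) := by
  have hs := Real.sqrt_pos.2 hρ
  have hst := Real.sqrt_pos.2 hρt
  have h : roeV U Ut - vs = (√(dens U) / (√(dens U) + √(dens Ut))) • (vel U - vs)
      + (√(dens Ut) / (√(dens U) + √(dens Ut))) • (vel Ut - vs) := by
    funext k
    simp only [roeV, Pi.sub_apply, Pi.add_apply, Pi.smul_apply, smul_eq_mul]
    field_simp
    ring
  rw [h]
  refine (norm3_add_le _ _).trans (le_of_eq ?_)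
  rw [norm3_smul, norm3_smul, abs_of_pos (by positivity), abs_of_pos (by positivity)]
  ring

lemma roe_cross_term_ge {U Ut : MHDState} (hU : U ∈ Gset) (hUt : Ut ∈ Gset) {d : ℕ}
    (hd : d ≤ 3) {ξ : Fin d → ℝ} (hξ : unitVec ξ) (vs Bs : Fin 3 → ℝ) :
    -(norm3 (magB U - magB Ut) / (√(dens U) + √(dens Ut)) * (phi U vs Bs + phi Ut vs Bs))
      ≤ (sq3 (magB U - Bs) - sq3 (magB Ut - Bs)) / 2
        * (dirDot hd ξ (roeV U Ut) - dirDot hd ξ vs) := by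
  have hs := Real.sqrt_pos.2 hU.1
  have hst := Real.sqrt_pos.2 hUt.1
  set x := √(dens U) * norm3 (vel U - vs)
  set xt := √(dens Ut) * norm3 (vel Ut - vs)
  set y := norm3 (magB U - Bs)
  set yt := norm3 (magB Ut - Bs)
  have hX : |dirDot hd ξ (roeV U Ut) - dirDot hd ξ vs| ≤ (x + xt) / (√(dens U) + √(dens Ut)) := by
    rw [← dirDot_sub, dirDot_eq_dot3]
    exact (abs_dot3_le_of_unit (sq3_dirVec hd hξ) _).trans (norm3_roeV_sub_le hU.1 hUt.1 vs)
  have hY : |sq3 (magB U - Bs) - sq3 (magB Ut - Bs)| ≤ norm3 (magB U - magB Ut) * (y + yt) := by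
    simpa only [sub_sub_sub_cancel_right] using abs_sq3_sub_sq3_le (magB U - Bs) (magB Ut - Bs)
  have hφ : x ^ 2 + y ^ 2 ≤ 2 * phi U vs Bs := by
    have := add_le_phi hU vs Bs
    rw [mul_pow, Real.sq_sqrt hU.1.le, ← sq3_eq_norm3_sq, ← sq3_eq_norm3_sq]
    linarith
  have hφt : xt ^ 2 + yt ^ 2 ≤ 2 * phi Ut vs Bs := by
    have := add_le_phi hUt vs Bs
    rw [mul_pow, Real.sq_sqrt hUt.1.le, ← sq3_eq_norm3_sq, ← sq3_eq_norm3_sq]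
    linarith
  have hprod : |sq3 (magB U - Bs) - sq3 (magB Ut - Bs)|
        * |dirDot hd ξ (roeV U Ut) - dirDot hd ξ vs|
      ≤ 2 * (norm3 (magB U - magB Ut) / (√(dens U) + √(dens Ut))
        * (phi U vs Bs + phi Ut vs Bs)) :=
    calc _ ≤ norm3 (magB U - magB Ut) * (y + yt) * ((x + xt) / (√(dens U) + √(dens Ut))) :=
          mul_le_mul hY hX (abs_nonneg _)
            (mul_nonneg (norm3_nonneg _) (add_nonneg (norm3_nonneg _) (norm3_nonneg _)))
      _ = norm3 (magB U - magB Ut) / (√(dens U) + √(dens Ut)) * ((x + xt) * (y + yt)) := by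
          ring
      _ ≤ norm3 (magB U - magB Ut) / (√(dens U) + √(dens Ut))
            * (2 * (phi U vs Bs + phi Ut vs Bs)) := by
          have : (x + xt) * (y + yt) ≤ 2 * (phi U vs Bs + phi Ut vs Bs) := by
            nlinarith [sq_nonneg (x - y), sq_nonneg (x - yt), sq_nonneg (xt - y),
              sq_nonneg (xt - yt)]
          exact mul_le_mul_of_nonneg_left this (div_nonneg (norm3_nonneg _) (by positivity))
      _ = _ := by ring
  have := neg_abs_le ((sq3 (magB U - Bs) - sq3 (magB Ut - Bs)) / 2
    * (dirDot hd ξ (roeV U Ut) - dirDot hd ξ vs))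
  rw [abs_mul, abs_div, abs_two] at this
  linarith

lemma dens_dirFlux (pfun : ℝ → ℝ → ℝ) {d : ℕ} (hd : d ≤ 3) (ξ : Fin d → ℝ) (U : MHDState) :
    dens (dirFlux pfun hd ξ U) = dens U * dirDot hd ξ (vel U) := by
  simp [dirFlux, dens, dirDot, flux, mk, Finset.sum_apply, Finset.mul_sum, mul_left_comm]

lemma dot8_hllMid (pfun : ℝ → ℝ → ℝ) {d : ℕ} (hd : d ≤ 3) (ξ : Fin d → ℝ)
    (Um Up : MHDState) (σm σp : ℝ) (n : MHDState) :
    dot8 (hllMid pfun hd ξ Um Up σm σp) n = (σp - σm)⁻¹ * (σp * dot8 Up n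
      - dot8 (dirFlux pfun hd ξ Up) n - σm * dot8 Um n + dot8 (dirFlux pfun hd ξ Um) n) := by
  simp only [hllMid, dot8, ← dotProduct.eq_1, smul_dotProduct, add_dotProduct, sub_dotProduct,
    smul_eq_mul]

lemma phi_add_single_energy (V : MHDState) (ε : ℝ) (vs Bs : Fin 3 → ℝ) :
    phi (V + ε • Pi.single 7 1) vs Bs = phi V vs Bs + ε := by
  simp only [phi, dot8, ← dotProduct.eq_1, add_dotProduct, smul_dotProduct, single_dotProduct,
    smul_eq_mul, one_mul, show nstar vs Bs 7 = 1 from rfl]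
  ring

lemma mem_closure_GstarSet {V : MHDState} (hρ : 0 < dens V)
    (hV : ∀ vs Bs : Fin 3 → ℝ, 0 ≤ phi V vs Bs) : V ∈ closure GstarSet := by
  have hmem : ∀ ε : ℝ, 0 < ε → V + ε • Pi.single 7 1 ∈ GstarSet := fun ε hε =>
    ⟨by simpa [dens] using hρ, fun vs Bs => by
      have := phi_add_single_energy V ε vs Bs
      rw [phi] at this
      linarith [hV vs Bs]⟩
  have hc : Continuous fun ε : ℝ => V + ε • (Pi.single 7 1 : MHDState) := by fun_prop
  have hlim := (hc.tendsto' 0 V (by simp)).mono_left (nhdsWithin_le_nhds (s := Set.Ioi 0))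
  exact mem_closure_of_tendsto hlim (eventually_nhdsWithin_of_forall hmem)

lemma roeV_comm (U Ut : MHDState) : roeV Ut U = roeV U Ut := by
  funext k
  simp only [roeV, add_comm]

lemma alphaL_swap (pfun : ℝ → ℝ → ℝ) {d : ℕ} (hd : d ≤ 3) (ξ : Fin d → ℝ) (U Ut : MHDState) :
    alphaL pfun hd ξ Ut U = min (dirDot hd ξ (vel Ut)) (dirDot hd ξ (roeV U Ut))
      - waveC pfun hd ξ Ut - norm3 (magB U - magB Ut) / (√(dens U) + √(dens Ut)) := by
  rw [alphaL, roeV_comm, norm3_sub_comm, add_comm (√(dens Ut))]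

lemma dens_hllMid (pfun : ℝ → ℝ → ℝ) {d : ℕ} (hd : d ≤ 3) (ξ : Fin d → ℝ)
    (Um Up : MHDState) (σm σp : ℝ) :
    dens (hllMid pfun hd ξ Um Up σm σp) = (σp - σm)⁻¹ * (σp * dens Up
      - dens (dirFlux pfun hd ξ Up) - σm * dens Um + dens (dirFlux pfun hd ξ Um)) := rfl

section TwoState

variable {pfun : ℝ → ℝ → ℝ} {d : ℕ} {hd : d ≤ 3} {ξ : Fin d → ℝ} {U Ut : MHDState}

lemma dirDot_vel_lt_alphaR (hEOS : IsEOS pfun) (hξ : unitVec ξ) (hU : U ∈ Gset) :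
    dirDot hd ξ (vel U) < alphaR pfun hd ξ U Ut := by
  have := le_max_left (dirDot hd ξ (vel U)) (dirDot hd ξ (roeV U Ut))
  have := waveC_pos hd hEOS hξ hU
  have : 0 ≤ norm3 (magB U - magB Ut) / (√(dens U) + √(dens Ut)) :=
    div_nonneg (norm3_nonneg _) (by positivity)
  rw [alphaR]
  linarith

lemma alphaL_lt_dirDot_vel (hEOS : IsEOS pfun) (hξ : unitVec ξ) (hU : U ∈ Gset) :
    alphaL pfun hd ξ U Ut < dirDot hd ξ (vel U) := by
  have := min_le_left (dirDot hd ξ (vel U)) (dirDot hd ξ (roeV U Ut))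
  have := waveC_pos hd hEOS hξ hU
  have : 0 ≤ norm3 (magB U - magB Ut) / (√(dens U) + √(dens Ut)) :=
    div_nonneg (norm3_nonneg _) (by positivity)
  rw [alphaL]
  linarith

lemma alphaL_lt_alphaR (hEOS : IsEOS pfun) (hξ : unitVec ξ) (hU : U ∈ Gset) (hUt : Ut ∈ Gset) :
    alphaL pfun hd ξ Ut U < alphaR pfun hd ξ U Ut := by
  rw [alphaL_swap, alphaR]
  have := min_le_right (dirDot hd ξ (vel Ut)) (dirDot hd ξ (roeV U Ut))
  have := le_max_right (dirDot hd ξ (vel U)) (dirDot hd ξ (roeV U Ut))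
  have := waveC_pos hd hEOS hξ hU
  have := waveC_pos hd hEOS hξ hUt
  have : 0 ≤ norm3 (magB U - magB Ut) / (√(dens U) + √(dens Ut)) :=
    div_nonneg (norm3_nonneg _) (by positivity)
  linarith

lemma dens_hllMid_pos (hEOS : IsEOS pfun) (hξ : unitVec ξ) (hU : U ∈ Gset) (hUt : Ut ∈ Gset)
    {α αt : ℝ} (hα : alphaR pfun hd ξ U Ut ≤ α) (hαt : αt ≤ alphaL pfun hd ξ Ut U) :
    0 < dens (hllMid pfun hd ξ Ut U αt α) := by
  have hlt := (hαt.trans_lt (alphaL_lt_alphaR hEOS hξ hU hUt)).trans_le hα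
  have hv := mul_pos (sub_pos.2 ((dirDot_vel_lt_alphaR hEOS hξ hU).trans_le hα)) hU.1
  have hvt := mul_pos (sub_pos.2 (hαt.trans_lt (alphaL_lt_dirDot_vel hEOS hξ hUt))) hUt.1
  rw [dens_hllMid, dens_dirFlux, dens_dirFlux]
  exact mul_pos (inv_pos.2 (sub_pos.2 hlt)) (by linarith)

lemma hllMid_nstar_add_nonneg (hEOS : IsEOS pfun) (hξ : unitVec ξ) (hU : U ∈ Gset)
    (hUt : Ut ∈ Gset) {α αt : ℝ} (hα : alphaR pfun hd ξ U Ut ≤ α)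
    (hαt : αt ≤ alphaL pfun hd ξ Ut U) (vs Bs : Fin 3 → ℝ) :
    0 ≤ dot8 (hllMid pfun hd ξ Ut U αt α) (nstar vs Bs) + sq3 Bs / 2
      + dot3 vs Bs * (α - αt)⁻¹ * (dirDot hd ξ (magB U) - dirDot hd ξ (magB Ut)) := by
  have hlt := (hαt.trans_lt (alphaL_lt_alphaR hEOS hξ hU hUt)).trans_le hα
  rw [alphaR] at hα
  rw [alphaL_swap] at hαt
  have hR := phi_dirFlux_bound hEOS hd hξ hU hα vs Bs
  have hL := phi_dirFlux_bound_of_le_min hEOS hd hξ hUt hαt vs Bs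
  have hX := roe_cross_term_ge hU hUt hd hξ vs Bs
  have hsum : dot8 (hllMid pfun hd ξ Ut U αt α) (nstar vs Bs) + sq3 Bs / 2
      + dot3 vs Bs * (α - αt)⁻¹ * (dirDot hd ξ (magB U) - dirDot hd ξ (magB Ut))
      = (α - αt)⁻¹ * ((α * phi U vs Bs - dot8 (dirFlux pfun hd ξ U) (nstar vs Bs)
          + dot3 vs Bs * dirDot hd ξ (magB U) - sq3 Bs / 2 * dirDot hd ξ vs)
        + (-αt * phi Ut vs Bs + dot8 (dirFlux pfun hd ξ Ut) (nstar vs Bs)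
          - dot3 vs Bs * dirDot hd ξ (magB Ut) + sq3 Bs / 2 * dirDot hd ξ vs)) := by
    rw [dot8_hllMid, phi, phi]
    field_simp [(sub_pos.2 hlt).ne']
    ring
  rw [hsum]
  exact mul_nonneg (inv_nonneg.2 (sub_pos.2 hlt).le) (by linarith)

end TwoState

theorem two_state_hll_estimate_general (pfun : ℝ → ℝ → ℝ) (hEOS : IsEOS pfun)
    {d : ℕ} (hd : d ≤ 3) (ξ : Fin d → ℝ) (hξ : unitVec ξ)
    (U Ut : MHDState) (hU : U ∈ Gset) (hUt : Ut ∈ Gset)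
    (α αt : ℝ) (hα : alphaR pfun hd ξ U Ut ≤ α) (hαt : αt ≤ alphaL pfun hd ξ Ut U) :
    αt < α ∧
      ∀ Ubar : MHDState,
        Ubar = (α - αt)⁻¹ •
            (α • U - dirFlux pfun hd ξ U - αt • Ut + dirFlux pfun hd ξ Ut) →
        Ubar ∈ Grho ∧
          (∀ vs Bs : Fin 3 → ℝ,
            0 ≤ dot8 Ubar (nstar vs Bs) + sq3 Bs / 2
              + dot3 vs Bs * (α - αt)⁻¹ *
                (dirDot hd ξ (magB U) - dirDot hd ξ (magB Ut))) ∧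
          (dirDot hd ξ (magB U) = dirDot hd ξ (magB Ut) → Ubar ∈ closure GstarSet) := by
  refine ⟨(hαt.trans_lt (alphaL_lt_alphaR hEOS hξ hU hUt)).trans_le hα, ?_⟩
  rintro _ rfl
  have hρ : 0 < dens (hllMid pfun hd ξ Ut U αt α) := dens_hllMid_pos hEOS hξ hU hUt hα hαt
  have hest := hllMid_nstar_add_nonneg hEOS hξ hU hUt hα hαt
  refine ⟨hρ, hest, fun hB => mem_closure_GstarSet hρ fun vs Bs => ?_⟩
  have h := hest vs Bs
  rwa [hB, sub_self, mul_zero, add_zero] at h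

/-- Corollary 2.4 (two-state HLL estimate). -/
theorem two_state_hll_estimate (pfun : ℝ → ℝ → ℝ) (hEOS : IsEOS pfun)
    {d : ℕ} (hd1 : 1 ≤ d) (hd : d ≤ 3) (ξ : Fin d → ℝ) (hξ : unitVec ξ)
    (U Ut : MHDState) (hU : U ∈ Gset) (hUt : Ut ∈ Gset)
    (α αt : ℝ) (hα : alphaR pfun hd ξ U Ut ≤ α) (hαt : αt ≤ alphaL pfun hd ξ Ut U) :
    αt < α ∧
      ∀ Ubar : MHDState,
        Ubar = (α - αt)⁻¹ •
            (α • U - dirFlux pfun hd ξ U - αt • Ut + dirFlux pfun hd ξ Ut) →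
        Ubar ∈ Grho ∧
          (∀ vs Bs : Fin 3 → ℝ,
            0 ≤ dot8 Ubar (nstar vs Bs) + sq3 Bs / 2
              + dot3 vs Bs * (α - αt)⁻¹ *
                (dirDot hd ξ (magB U) - dirDot hd ξ (magB Ut))) ∧
          (dirDot hd ξ (magB U) = dirDot hd ξ (magB Ut) → Ubar ∈ closure GstarSet) :=
  two_state_hll_estimate_general pfun hEOS hd ξ hξ U Ut hU hUt α αt hα hαt
end MHD
end
end

section
/- Pairing inequality (Lemma 2.9): Let U = (ρ, ρv, B, E) ∈ 𝒢 and Ũ = (ρ̃, ρ̃ṽ, B̃, Ẽ) ∈ 𝒢, let v*, B* ∈ ℝ³, let d ∈ {1,2,3}, let ξ ∈ ℝ^d (not necessarily a unit vector), and let δ ∈ ℝ. Set θ = θ(U, v*, B*), θ̃ = θ(Ũ, v*, B*), and f(U, Ũ; δ) = (|B̃ − B|/√2)·√(δ²/ρ + (1 − δ)²/ρ̃). Then ⟨ξ, v*⟩·[(|B|²/2 − B·B*) − (|B̃|²/2 − B̃·B*)] ≤ ⟨ξ, δv + (1 − δ)ṽ⟩·Σ_{k=1}^{3}(θ_k² −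 θ̃_k²) + |ξ|·f(U, Ũ; δ)·(|θ|² + |θ̃|²). -/
noncomputable section

open Finset

namespace MHD

lemma two_cs (P Q A B : ℝ) : (-(P * A + Q * B))^2 ≤ (P^2 + Q^2) * (A^2 + B^2) := by
  nlinarith [sq_nonneg (P * B - Q * A)]

lemma sqrt2_sq : (Real.sqrt 2) ^ 2 = 2 := Real.sq_sqrt (by norm_num)

/-- Abstract final combination. -/
lemma final_combination (c D Ξ W s x y z R T : ℝ)
    (hΞ : 0 ≤ Ξ) (hs : 0 ≤ s) (hx : 0 ≤ x) (hy : 0 ≤ y) (hz : 0 ≤ z) (hR : 0 ≤ R)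
    (hcb : |c| ≤ Ξ * W) (hW : W ≤ s * x)
    (hD : |D| ≤ R * y + R * z)
    (hT : x ^ 2 + y ^ 2 + z ^ 2 ≤ 2 * T) :
    c * (D / 2) ≤ Ξ * (R / Real.sqrt 2 * s) * T := by
  have h2pos : (0:ℝ) < Real.sqrt 2 := by positivity
  have hkey : x * (y + z) ≤ Real.sqrt 2 * T := by
    have h1 : Real.sqrt 2 * (x * (y + z)) ≤ x ^ 2 + y ^ 2 + z ^ 2 := by
      nlinarith [sq_nonneg (x - Real.sqrt 2 * y), sq_nonneg (x - Real.sqrt 2 * z), sqrt2_sq]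
    nlinarith [sqrt2_sq, h2pos, h1, hT]
  have step1 : c * D ≤ |c| * |D| := by
    rw [← abs_mul]; exact le_abs_self _
  have hcb' : |c| ≤ Ξ * (s * x) := by
    refine hcb.trans ?_
    exact mul_le_mul_of_nonneg_left hW hΞ
  have step2 : |c| * |D| ≤ (Ξ * (s * x)) * (R * (y + z)) := by
    have hD' : |D| ≤ R * (y + z) := by rw [mul_add]; exact hD
    exact mul_le_mul hcb' hD' (abs_nonneg _) (by positivity)
  have step3 : (Ξ * (s * x)) * (R * (y + z)) ≤ Ξ * s * R * (Real.sqrt 2 * T) := by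
    have h := mul_le_mul_of_nonneg_left hkey (show (0:ℝ) ≤ Ξ * s * R by positivity)
    calc (Ξ * (s * x)) * (R * (y + z)) = Ξ * s * R * (x * (y + z)) := by ring
      _ ≤ Ξ * s * R * (Real.sqrt 2 * T) := h
  have heq : Ξ * s * R * (Real.sqrt 2 * T) / 2 = Ξ * (R / Real.sqrt 2 * s) * T := by
    have hhalf : R / Real.sqrt 2 = R * Real.sqrt 2 / 2 := by
      rw [div_eq_div_iff h2pos.ne' (by norm_num : (2:ℝ) ≠ 0)]
      nlinarith [sqrt2_sq]
    rw [hhalf]; ring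
  calc c * (D / 2) = c * D / 2 := by ring
    _ ≤ |c| * |D| / 2 := by linarith only [step1]
    _ ≤ (Ξ * (s * x)) * (R * (y + z)) / 2 := by linarith only [step2]
    _ ≤ Ξ * s * R * (Real.sqrt 2 * T) / 2 := by linarith only [step3]
    _ = Ξ * (R / Real.sqrt 2 * s) * T := heq

lemma thetaSq_eq (U : MHDState) (vs Bs : Fin 3 → ℝ) : thetaSq U vs Bs =
    ((magB U 0 - Bs 0)^2 + (magB U 1 - Bs 1)^2 + (magB U 2 - Bs 2)^2
     + (Real.sqrt (dens U) * (vel U 0 - vs 0))^2 + (Real.sqrt (dens U) * (vel U 1 - vs 1))^2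
     + (Real.sqrt (dens U) * (vel U 2 - vs 2))^2 + (Real.sqrt (2 * intE U))^2) / 2 := by
  have t0 : theta U vs Bs 0 = (magB U 0 - Bs 0) / Real.sqrt 2 := rfl
  have t1 : theta U vs Bs 1 = (magB U 1 - Bs 1) / Real.sqrt 2 := rfl
  have t2 : theta U vs Bs 2 = (magB U 2 - Bs 2) / Real.sqrt 2 := rfl
  have t3 : theta U vs Bs 3 = Real.sqrt (dens U) * (vel U 0 - vs 0) / Real.sqrt 2 := rfl
  have t4 : theta U vs Bs 4 = Real.sqrt (dens U) * (vel U 1 - vs 1) / Real.sqrt 2 := rfl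
  have t5 : theta U vs Bs 5 = Real.sqrt (dens U) * (vel U 2 - vs 2) / Real.sqrt 2 := rfl
  have t6 : theta U vs Bs 6 = Real.sqrt (2 * intE U) / Real.sqrt 2 := rfl
  rw [thetaSq, Fin.sum_univ_seven, t0, t1, t2, t3, t4, t5, t6]
  simp only [div_pow, sqrt2_sq]
  ring

/-- Cauchy–Schwarz type bound for `dirDot`. -/
lemma dirDot_bound {d : ℕ} (hd : d ≤ 3) (ξ : Fin d → ℝ) (w : Fin 3 → ℝ) :
    |∑ k, ξ k * w (Fin.castLE hd k)| ≤
      Real.sqrt (∑ k, (ξ k) ^ 2) * Real.sqrt (∑ k, (w k) ^ 2) := by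
  have hsub : ∑ k : Fin d, (w (Fin.castLE hd k)) ^ 2 ≤ ∑ k : Fin 3, (w k) ^ 2 := by
    have hinj : ∀ x ∈ (univ : Finset (Fin d)), ∀ y ∈ univ,
        Fin.castLE hd x = Fin.castLE hd y → x = y :=
      fun x _ y _ h => Fin.castLE_injective hd h
    have himg : ∑ j ∈ (univ : Finset (Fin d)).image (Fin.castLE hd), (w j) ^ 2
        = ∑ k : Fin d, (w (Fin.castLE hd k)) ^ 2 := Finset.sum_image hinj
    calc ∑ k : Fin d, (w (Fin.castLE hd k)) ^ 2
        = ∑ j ∈ (univ : Finset (Fin d)).image (Fin.castLE hd), (w j) ^ 2 := himg.symm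
      _ ≤ ∑ k : Fin 3, (w k) ^ 2 :=
          Finset.sum_le_sum_of_subset_of_nonneg (Finset.subset_univ _)
            (fun _ _ _ => sq_nonneg _)
  have key : ∀ f : Fin d → ℝ, (∀ k, (f k)^2 = (ξ k)^2) →
      ∑ k, f k * w (Fin.castLE hd k) ≤
        Real.sqrt (∑ k, (ξ k) ^ 2) * Real.sqrt (∑ k, (w k) ^ 2) := by
    intro f hf
    calc ∑ k, f k * w (Fin.castLE hd k)
        ≤ Real.sqrt (∑ k, (f k) ^ 2) *
            Real.sqrt (∑ k : Fin d, (w (Fin.castLE hd k)) ^ 2) :=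
          Real.sum_mul_le_sqrt_mul_sqrt _ _ _
      _ ≤ Real.sqrt (∑ k, (ξ k) ^ 2) * Real.sqrt (∑ k, (w k) ^ 2) := by
          apply mul_le_mul
          · apply Real.sqrt_le_sqrt
            exact le_of_eq (Finset.sum_congr rfl fun k _ => hf k)
          · exact Real.sqrt_le_sqrt hsub
          · positivity
          · positivity
  apply abs_le.2
  constructor
  · have := key (fun k => -ξ k) (fun k => by simp)
    simp only [neg_mul] at this
    rw [Finset.sum_neg_distrib] at this
    linarith
  · exact key ξ (fun k => rfl)

/-- Lemma 2.9 (pairing inequality). -/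
theorem pairing_inequality
    {d : ℕ} (hd1 : 1 ≤ d) (hd : d ≤ 3) (ξ : Fin d → ℝ)
    (U Ut : MHDState) (hU : U ∈ Gset) (hUt : Ut ∈ Gset)
    (vs Bs : Fin 3 → ℝ) (δ : ℝ) :
    dirDot hd ξ vs *
        ((sq3 (magB U) / 2 - dot3 (magB U) Bs)
          - (sq3 (magB Ut) / 2 - dot3 (magB Ut) Bs)) ≤
      dirDot hd ξ (fun k => δ * vel U k + (1 - δ) * vel Ut k) *
          (theta U vs Bs 0 ^ 2 + theta U vs Bs 1 ^ 2 + theta U vs Bs 2 ^ 2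
            - (theta Ut vs Bs 0 ^ 2 + theta Ut vs Bs 1 ^ 2 + theta Ut vs Bs 2 ^ 2))
        + Real.sqrt (∑ k, (ξ k) ^ 2) *
            (norm3 (magB Ut - magB U) / Real.sqrt 2 *
              Real.sqrt (δ ^ 2 / dens U + (1 - δ) ^ 2 / dens Ut)) *
            (thetaSq U vs Bs + thetaSq Ut vs Bs) := by
  obtain ⟨hρ, hE⟩ := hU
  obtain ⟨hρt, hEt⟩ := hUt
  have hsρ : (0:ℝ) < Real.sqrt (dens U) := Real.sqrt_pos.2 hρ
  have hsρt : (0:ℝ) < Real.sqrt (dens Ut) := Real.sqrt_pos.2 hρt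
  have hsρ2 : Real.sqrt (dens U) ^ 2 = dens U := Real.sq_sqrt hρ.le
  have hsρt2 : Real.sqrt (dens Ut) ^ 2 = dens Ut := Real.sq_sqrt hρt.le
  have h2pos : (0:ℝ) < Real.sqrt 2 := by positivity
  -- abbreviations
  set b : Fin 3 → ℝ := fun k => magB U k - Bs k with hb
  set bt : Fin 3 → ℝ := fun k => magB Ut k - Bs k with hbt
  set a : Fin 3 → ℝ := fun k => Real.sqrt (dens U) * (vel U k - vs k) with ha
  set at' : Fin 3 → ℝ := fun k => Real.sqrt (dens Ut) * (vel Ut k - vs k) with hat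
  set bd : Fin 3 → ℝ := fun k => magB Ut k - magB U k with hbd
  set Sb := ∑ k, (b k)^2 with hSb
  set Sbt := ∑ k, (bt k)^2 with hSbt
  set Sa := ∑ k, (a k)^2 with hSa
  set Sat := ∑ k, (at' k)^2 with hSat
  set Sbd := ∑ k, (bd k)^2 with hSbd
  set Ξ := Real.sqrt (∑ k, (ξ k) ^ 2) with hΞ
  set s := Real.sqrt (δ ^ 2 / dens U + (1 - δ) ^ 2 / dens Ut) with hs
  -- LHS bracket
  have hLb : (sq3 (magB U) / 2 - dot3 (magB U) Bs)
      - (sq3 (magB Ut) / 2 - dot3 (magB Ut) Bs) = (Sb - Sbt) / 2 := by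
    simp only [sq3, dot3, hSb, hSbt, hb, hbt, Fin.sum_univ_three]
    ring
  -- theta bracket
  have hTb : theta U vs Bs 0 ^ 2 + theta U vs Bs 1 ^ 2 + theta U vs Bs 2 ^ 2
      - (theta Ut vs Bs 0 ^ 2 + theta Ut vs Bs 1 ^ 2 + theta Ut vs Bs 2 ^ 2)
      = (Sb - Sbt) / 2 := by
    have t0 : theta U vs Bs 0 = b 0 / Real.sqrt 2 := rfl
    have t1 : theta U vs Bs 1 = b 1 / Real.sqrt 2 := rfl
    have t2 : theta U vs Bs 2 = b 2 / Real.sqrt 2 := rfl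
    have s0 : theta Ut vs Bs 0 = bt 0 / Real.sqrt 2 := rfl
    have s1 : theta Ut vs Bs 1 = bt 1 / Real.sqrt 2 := rfl
    have s2 : theta Ut vs Bs 2 = bt 2 / Real.sqrt 2 := rfl
    rw [t0, t1, t2, s0, s1, s2]
    simp only [div_pow, sqrt2_sq, hSb, hSbt, Fin.sum_univ_three]
    ring
  -- norm3 identification
  have hn : norm3 (magB Ut - magB U) = Real.sqrt Sbd := by
    rw [norm3, sq3, dot3]
    congr 1
    refine Finset.sum_congr rfl fun k _ => ?_
    simp only [Pi.sub_apply, hbd]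
    ring
  -- |c| bound via Cauchy-Schwarz
  set u : Fin 3 → ℝ := fun k => vs k - (δ * vel U k + (1 - δ) * vel Ut k) with hu
  have hc : dirDot hd ξ vs - dirDot hd ξ (fun k => δ * vel U k + (1 - δ) * vel Ut k)
      = ∑ k, ξ k * u (Fin.castLE hd k) := by
    rw [dirDot, dirDot, ← Finset.sum_sub_distrib]
    exact Finset.sum_congr rfl fun k _ => by simp only [hu]; ring
  set c := ∑ k, ξ k * u (Fin.castLE hd k) with hcdef
  have hcb : |c| ≤ Ξ * Real.sqrt (∑ k, (u k)^2) := dirDot_bound hd ξ u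
  -- pointwise bound for u
  have hub : ∑ k, (u k)^2 ≤ (δ ^ 2 / dens U + (1 - δ) ^ 2 / dens Ut) * (Sa + Sat) := by
    have key : ∀ k, (u k)^2 ≤ (δ ^ 2 / dens U + (1 - δ) ^ 2 / dens Ut) * ((a k)^2 + (at' k)^2) := by
      intro k
      have hue : u k = -((δ / Real.sqrt (dens U)) * a k
          + ((1 - δ) / Real.sqrt (dens Ut)) * at' k) := by
        simp only [hu, ha, hat]
        field_simp
        ring
      have h1 : (δ / Real.sqrt (dens U))^2 = δ^2 / dens U := by
        rw [div_pow, hsρ2]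
      have h2 : ((1 - δ) / Real.sqrt (dens Ut))^2 = (1 - δ)^2 / dens Ut := by
        rw [div_pow, hsρt2]
      calc (u k)^2 = (-((δ / Real.sqrt (dens U)) * a k
            + ((1 - δ) / Real.sqrt (dens Ut)) * at' k))^2 := by rw [hue]
        _ ≤ ((δ / Real.sqrt (dens U))^2 + ((1 - δ) / Real.sqrt (dens Ut))^2)
              * ((a k)^2 + (at' k)^2) := two_cs _ _ _ _
        _ = (δ ^ 2 / dens U + (1 - δ) ^ 2 / dens Ut) * ((a k)^2 + (at' k)^2) := by
            rw [h1, h2]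
    calc ∑ k, (u k)^2 ≤ ∑ k, (δ ^ 2 / dens U + (1 - δ) ^ 2 / dens Ut) * ((a k)^2 + (at' k)^2) :=
          Finset.sum_le_sum fun k _ => key k
      _ = (δ ^ 2 / dens U + (1 - δ) ^ 2 / dens Ut) * (Sa + Sat) := by
          rw [← Finset.mul_sum, Finset.sum_add_distrib]
  have hargnn : (0:ℝ) ≤ δ ^ 2 / dens U + (1 - δ) ^ 2 / dens Ut := by positivity
  have hu_le : Real.sqrt (∑ k, (u k)^2) ≤ s * Real.sqrt (Sa + Sat) := by
    rw [hs, ← Real.sqrt_mul hargnn]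
    exact Real.sqrt_le_sqrt hub
  -- bracket difference bound
  have hDb : |Sb - Sbt| ≤ Real.sqrt Sbd * Real.sqrt Sb + Real.sqrt Sbd * Real.sqrt Sbt := by
    have hdiff : Sbt - Sb = ∑ k, bd k * (b k + bt k) := by
      simp only [hSb, hSbt, hb, hbt, hbd, Fin.sum_univ_three]
      ring
    have h1 : ∑ k, bd k * b k ≤ Real.sqrt Sbd * Real.sqrt Sb :=
      Real.sum_mul_le_sqrt_mul_sqrt _ _ _
    have h2 : ∑ k, bd k * bt k ≤ Real.sqrt Sbd * Real.sqrt Sbt :=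
      Real.sum_mul_le_sqrt_mul_sqrt _ _ _
    have h1' : ∑ k, (-bd k) * b k ≤ Real.sqrt Sbd * Real.sqrt Sb := by
      have := Real.sum_mul_le_sqrt_mul_sqrt (univ : Finset (Fin 3)) (fun k => -bd k) b
      simpa [neg_sq] using this
    have h2' : ∑ k, (-bd k) * bt k ≤ Real.sqrt Sbd * Real.sqrt Sbt := by
      have := Real.sum_mul_le_sqrt_mul_sqrt (univ : Finset (Fin 3)) (fun k => -bd k) bt
      simpa [neg_sq] using this
    have e1 : ∑ k, bd k * (b k + bt k) = (∑ k, bd k * b k) + ∑ k, bd k * bt k := by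
      rw [← Finset.sum_add_distrib]; exact Finset.sum_congr rfl fun k _ => by ring
    have e2 : ∑ k, (-bd k) * b k = -∑ k, bd k * b k := by
      rw [← Finset.sum_neg_distrib]; exact Finset.sum_congr rfl fun k _ => by ring
    have e3 : ∑ k, (-bd k) * bt k = -∑ k, bd k * bt k := by
      rw [← Finset.sum_neg_distrib]; exact Finset.sum_congr rfl fun k _ => by ring
    rw [abs_sub_comm]
    apply abs_le.2
    constructor
    · rw [e2] at h1'; rw [e3] at h2'; rw [hdiff, e1]; linarith only [h1', h2']
    · rw [hdiff, e1]; linarith only [h1, h2]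
  -- thetaSq lower bound
  have hT : (Sa + Sat + Sb + Sbt) / 2 ≤ thetaSq U vs Bs + thetaSq Ut vs Bs := by
    rw [thetaSq_eq U vs Bs, thetaSq_eq Ut vs Bs]
    have e1 : (0:ℝ) ≤ (Real.sqrt (2 * intE U))^2 := sq_nonneg _
    have e2 : (0:ℝ) ≤ (Real.sqrt (2 * intE Ut))^2 := sq_nonneg _
    simp only [hSa, hSat, hSb, hSbt, ha, hat, hb, hbt, Fin.sum_univ_three]
    linarith only [e1, e2]
  -- key scalar inequality and assembly
  set x := Real.sqrt (Sa + Sat) with hx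
  set y := Real.sqrt Sb with hy
  set z := Real.sqrt Sbt with hz
  set T := thetaSq U vs Bs + thetaSq Ut vs Bs with hT2
  have hx2 : x ^ 2 = Sa + Sat := Real.sq_sqrt (by positivity)
  have hy2 : y ^ 2 = Sb := Real.sq_sqrt (by positivity)
  have hz2 : z ^ 2 = Sbt := Real.sq_sqrt (by positivity)
  have hΞnn : 0 ≤ Ξ := Real.sqrt_nonneg _
  have hsnn : 0 ≤ s := Real.sqrt_nonneg _
  have hxnn : 0 ≤ x := Real.sqrt_nonneg _
  have hynn : 0 ≤ y := Real.sqrt_nonneg _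
  have hznn : 0 ≤ z := Real.sqrt_nonneg _
  have hbdnn : 0 ≤ Real.sqrt Sbd := Real.sqrt_nonneg _
  clear_value Sb Sbt Sa Sat Sbd Ξ s x y z T c
  have hTsum : x ^ 2 + y ^ 2 + z ^ 2 ≤ 2 * T := by
    rw [hx2, hy2, hz2]; linarith only [hT]
  have main := final_combination c (Sb - Sbt) Ξ (Real.sqrt (∑ k, (u k) ^ 2)) s x y z
    (Real.sqrt Sbd) T hΞnn hsnn hxnn hynn hznn hbdnn hcb hu_le hDb hTsum
  rw [hLb, hTb, hn]
  have e : dirDot hd ξ vs * ((Sb - Sbt) / 2)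
      = (dirDot hd ξ (fun k => δ * vel U k + (1 - δ) * vel Ut k)) * ((Sb - Sbt) / 2)
        + (dirDot hd ξ vs - dirDot hd ξ (fun k => δ * vel U k + (1 - δ) * vel Ut k))
          * ((Sb - Sbt) / 2) := by ring
  rw [e, hc]
  linarith only [main]

end MHD
end
end
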